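/- arXiv:2401.15361 — 4 statements merged into one kernel-verified Lean document; each statement's English description precedes it below -/
import Mathlib

section
/- For all integers n > d ≥ 2 and 0 ≤ k ≤ d−1, the rational identity F(d,n,k) = ρ(d, d−k−1) · Ffac(d,n) + F(d−2,n,k) holds. -/
noncomputable section

/-- `ρ(d,k) = (1/2)(binom(⌈d/2⌉,k) + binom(⌊d/2⌋,k))`. -/
def rho (d k : ℕ) : ℚ :=
  (((d + 1) / 2).choose k + (d / 2).choose k) / 2

/-- Extended binomial coefficient: `binom(a,b) = 0` unless `0 ≤ b ≤ a`. -/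
def ichoose (a b : ℤ) : ℤ :=
  if 0 ≤ b ∧ b ≤ a then (a.toNat).choose b.toNat else 0

/-- `δ(d) = ⌈d/2⌉ - ⌊d/2⌋`. -/
def deltaPar (d : ℕ) : ℕ := (d + 1) / 2 - d / 2

/-- `F(d,n,k)`, the number of `k`-faces of the cyclic polytope `C(d,n)` (for `d ≥ 2`). -/
def Fcyc (d n k : ℕ) : ℚ :=
  (((n : ℚ) - (deltaPar d : ℚ) * ((n : ℚ) - (k : ℚ) - 2)) / ((n : ℚ) - (k : ℚ) - 1)) *
    ∑ j ∈ Finset.range (d / 2 + 1),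
      (ichoose ((n : ℤ) - 1 - (j : ℤ)) ((k : ℤ) + 1 - (j : ℤ)) : ℚ) *
        (ichoose ((n : ℤ) - (k : ℤ) - 1) (2 * (j : ℤ) - (k : ℤ) - 1 + (deltaPar d : ℤ)) : ℚ)

/-- `Ffac(d,n)`, the number of facets of the cyclic polytope `C(d,n)` (for `d ≥ 2`). -/
def Ffac (d n : ℕ) : ℚ :=
  (ichoose ((n : ℤ) - (((d + 1) / 2 : ℕ) : ℤ)) ((n : ℤ) - (d : ℤ)) : ℚ) +
    (ichoose ((n : ℤ) - (((d + 2) / 2 : ℕ) : ℤ)) ((n : ℤ) - (d : ℤ)) : ℚ)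

open Nat in
lemma choose_cast' (k l : ℕ) : (((k + l).choose k : ℕ) : ℚ) = (k + l)! / (k ! * l !) := by
  rw [Nat.cast_choose ℚ (Nat.le_add_right k l), Nat.add_sub_cancel_left]

lemma fact_ne' (m : ℕ) : ((m.factorial : ℕ) : ℚ) ≠ 0 :=
  Nat.cast_ne_zero.mpr (Nat.factorial_ne_zero m)

lemma ichoose_natCast (A B : ℕ) : ichoose (A : ℤ) (B : ℤ) = A.choose B := by
  unfold ichoose
  split
  · simp
  · next h =>
    have : A < B := by omega
    simp [Nat.choose_eq_zero_of_lt this]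

lemma ichoose_neg (a b : ℤ) (h : b < 0) : ichoose a b = 0 := by
  unfold ichoose; rw [if_neg]; omega

open Nat in
lemma even_key (a b e : ℕ) (h : 1 ≤ a + b) :
    ((2*a+2*b+e+1 : ℕ) : ℚ) * ((a+(b+e)).choose a : ℕ) * ((b+(e+1)).choose b : ℕ)
      = ((b+a).choose b : ℕ) *
        ((((e+1)+(a+b)).choose (e+1) : ℕ) + (((e+1)+(a+b-1)).choose (e+1) : ℕ)) *
        ((b+(e+1) : ℕ) : ℚ) := by
  rcases a with _ | a
  · rcases b with _ | b
    · omega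
    · rw [Nat.choose_zero_right]
      rw [show (b+1)+0 = b+1 from rfl, Nat.choose_self]
      simp only [choose_cast']
      rw [show (0:ℕ)+(b+1)-1 = b from by omega, show (0:ℕ)+(b+1) = b+1 from by omega]
      rw [show (b+1)+(e+1) = b+e+1+1 from by omega,
        show (e+1)+(b+1) = b+e+1+1 from by omega,
        show (e+1)+b = b+e+1 from by omega]
      have h1 : (((b+e+1+1).factorial : ℕ) : ℚ) = (b+e+2) * ((b+e+1) * (b+e).factorial) := by
        rw [Nat.factorial_succ, Nat.factorial_succ]; push_cast; ring
      have h2 : (((b+e+1).factorial : ℕ) : ℚ) = (b+e+1) * (b+e).factorial := by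
        rw [Nat.factorial_succ]; push_cast; ring
      have h3 : (((b+1).factorial : ℕ) : ℚ) = (b+1) * b.factorial := by
        rw [Nat.factorial_succ]; push_cast; ring
      have h4 : (((e+1).factorial : ℕ) : ℚ) = (e+1) * e.factorial := by
        rw [Nat.factorial_succ]; push_cast; ring
      rw [h1, h2, h3, h4]
      have hB := fact_ne' b
      have hE := fact_ne' e
      have hP := fact_ne' (b+e)
      push_cast
      field_simp
      ring
  · rw [show (a+1)+b-1 = a+b from by omega]
    simp only [choose_cast']
    rw [show (a+1)+b = a+b+1 from by omega]
    rw [show (a+1)+(b+e) = a+b+e+1 from by omega,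
      show b+(e+1) = b+e+1 from by omega,
      show b+(a+1) = a+b+1 from by omega,
      show (e+1)+(a+b+1) = a+b+e+2 from by omega,
      show (e+1)+(a+b) = a+b+e+1 from by omega]
    have h1 : (((a+b+e+2).factorial : ℕ) : ℚ) = (a+b+e+2) * ((a+b+e+1) * (a+b+e).factorial) := by
      rw [show (a+b+e+2) = (a+b+e+1)+1 from rfl, Nat.factorial_succ, Nat.factorial_succ]
      push_cast; ring
    have h2 : (((a+b+e+1).factorial : ℕ) : ℚ) = (a+b+e+1) * (a+b+e).factorial := by
      rw [Nat.factorial_succ]; push_cast; ring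
    have h3 : (((b+e+1).factorial : ℕ) : ℚ) = (b+e+1) * (b+e).factorial := by
      rw [Nat.factorial_succ]; push_cast; ring
    have h4 : (((a+b+1).factorial : ℕ) : ℚ) = (a+b+1) * (a+b).factorial := by
      rw [Nat.factorial_succ]; push_cast; ring
    have h5 : (((a+1).factorial : ℕ) : ℚ) = (a+1) * a.factorial := by
      rw [Nat.factorial_succ]; push_cast; ring
    have h6 : (((e+1).factorial : ℕ) : ℚ) = (e+1) * e.factorial := by
      rw [Nat.factorial_succ]; push_cast; ring
    rw [h1, h2, h3, h4, h5, h6]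
    have hA := fact_ne' a
    have hB := fact_ne' b
    have hE := fact_ne' e
    have hP := fact_ne' (b+e)
    have hQ := fact_ne' (a+b)
    have hR := fact_ne' (a+b+e)
    push_cast
    field_simp
    ring

open Nat in
lemma odd_key (a b c : ℕ) (h : 2 ≤ a + b) :
    ((2*a+b : ℕ) : ℚ) * ((a+(b+c)).choose a : ℕ) * ((b+(c+1)).choose b : ℕ)
      = (((b+a).choose b : ℕ) + ((a+b-1).choose b : ℕ)) *
        (((c+1)+(a+b-1)).choose (c+1) : ℕ) * ((b+(c+1) : ℕ) : ℚ) := by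
  rcases a with _ | a
  · rw [Nat.choose_zero_right]
    rw [show (b:ℕ)+0 = b from rfl, Nat.choose_self]
    rw [show (0:ℕ)+b-1 = b-1 from by omega]
    rw [Nat.choose_eq_zero_of_lt (by omega : b - 1 < b)]
    obtain ⟨b', rfl⟩ : ∃ b', b = b' + 1 := ⟨b - 1, by omega⟩
    rw [show b'+1-1 = b' from by omega]
    simp only [choose_cast']
    rw [show (b'+1)+(c+1) = b'+c+1+1 from by omega,
      show (c+1)+b' = b'+c+1 from by omega]
    have h1 : (((b'+c+1+1).factorial : ℕ) : ℚ) = (b'+c+2) * ((b'+c+1) * (b'+c).factorial) := by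
      rw [Nat.factorial_succ, Nat.factorial_succ]; push_cast; ring
    have h2 : (((b'+c+1).factorial : ℕ) : ℚ) = (b'+c+1) * (b'+c).factorial := by
      rw [Nat.factorial_succ]; push_cast; ring
    have h3 : (((b'+1).factorial : ℕ) : ℚ) = (b'+1) * b'.factorial := by
      rw [Nat.factorial_succ]; push_cast; ring
    have h4 : (((c+1).factorial : ℕ) : ℚ) = (c+1) * c.factorial := by
      rw [Nat.factorial_succ]; push_cast; ring
    rw [h1, h2, h3, h4]
    have hB := fact_ne' b'
    have hC := fact_ne' c
    have hP := fact_ne' (b'+c)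
    push_cast
    field_simp
    ring
  · rw [show (a+1)+b-1 = b+a from by omega]
    simp only [choose_cast']
    rw [show (a+1)+(b+c) = a+b+c+1 from by omega,
      show b+(c+1) = b+c+1 from by omega,
      show b+(a+1) = a+b+1 from by omega,
      show b+a = a+b from by omega,
      show (c+1)+(a+b) = a+b+c+1 from by omega]
    have h1 : (((a+b+c+1).factorial : ℕ) : ℚ) = (a+b+c+1) * (a+b+c).factorial := by
      rw [Nat.factorial_succ]; push_cast; ring
    have h2 : (((b+c+1).factorial : ℕ) : ℚ) = (b+c+1) * (b+c).factorial := by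
      rw [Nat.factorial_succ]; push_cast; ring
    have h3 : (((a+b+1).factorial : ℕ) : ℚ) = (a+b+1) * (a+b).factorial := by
      rw [Nat.factorial_succ]; push_cast; ring
    have h4 : (((a+1).factorial : ℕ) : ℚ) = (a+1) * a.factorial := by
      rw [Nat.factorial_succ]; push_cast; ring
    have h5 : (((c+1).factorial : ℕ) : ℚ) = (c+1) * c.factorial := by
      rw [Nat.factorial_succ]; push_cast; ring
    rw [h1, h2, h3, h4, h5]
    have hA := fact_ne' a
    have hB := fact_ne' b
    have hC := fact_ne' c
    have hP := fact_ne' (b+c)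
    have hQ := fact_ne' (a+b)
    have hR := fact_ne' (a+b+c)
    push_cast
    field_simp
    ring

/-- For `n > d ≥ 2` and `0 ≤ k ≤ d-1`,
`F(d,n,k) = ρ(d,d-k-1) ⬝ Ffac(d,n) + F(d-2,n,k)`. -/
theorem cyclic_face_recursion (d n k : ℕ) (hd : 2 ≤ d) (hn : d < n) (hk : k + 1 ≤ d) :
    Fcyc d n k = rho d (d - k - 1) * Ffac d n + Fcyc (d - 2) n k := by
  have hδ : deltaPar (d - 2) = deltaPar d := by unfold deltaPar; omega
  unfold Fcyc
  rw [hδ]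
  rw [show d / 2 + 1 = ((d - 2) / 2 + 1) + 1 from by omega]
  rw [Finset.sum_range_succ, mul_add]
  have hKey :
      (((n : ℚ) - (deltaPar d : ℚ) * ((n : ℚ) - (k : ℚ) - 2)) / ((n : ℚ) - (k : ℚ) - 1)) *
        ((ichoose ((n : ℤ) - 1 - (((d - 2) / 2 + 1 : ℕ) : ℤ))
            ((k : ℤ) + 1 - (((d - 2) / 2 + 1 : ℕ) : ℤ)) : ℚ) *
         (ichoose ((n : ℤ) - (k : ℤ) - 1)
            (2 * (((d - 2) / 2 + 1 : ℕ) : ℤ) - (k : ℤ) - 1 + (deltaPar d : ℤ)) : ℚ))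
        = rho d (d - k - 1) * Ffac d n := by
    by_cases hkm : k + 1 < d / 2
    · rw [ichoose_neg _ _ (by push_cast; omega)]
      unfold rho
      rw [Nat.choose_eq_zero_of_lt (by omega), Nat.choose_eq_zero_of_lt (by omega)]
      norm_num
    · push_neg at hkm
      unfold rho Ffac
      rcases Nat.even_or_odd d with ⟨m, hm⟩ | ⟨m, hm⟩
      · -- d = m + m
        have hm1 : 1 ≤ m := by omega
        set a := k + 1 - d / 2 with ha
        set b := d - k - 1 with hb
        set e := n - d - 1 with he
        have hδ0 : deltaPar d = 0 := by unfold deltaPar; omega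
        rw [hδ0]
        rw [show ((n : ℤ) - 1 - (((d - 2) / 2 + 1 : ℕ) : ℤ)) = ((a + (b + e) : ℕ) : ℤ) from by
          push_cast; omega]
        rw [show ((k : ℤ) + 1 - (((d - 2) / 2 + 1 : ℕ) : ℤ)) = ((a : ℕ) : ℤ) from by
          push_cast; omega]
        rw [show (2 * (((d - 2) / 2 + 1 : ℕ) : ℤ) - (k : ℤ) - 1 + ((0:ℕ) : ℤ))
            = ((b : ℕ) : ℤ) from by push_cast; omega]
        rw [show ((n : ℤ) - (k : ℤ) - 1) = ((b + (e + 1) : ℕ) : ℤ) from by push_cast; omega]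
        rw [show ((n : ℤ) - (((d + 1) / 2 : ℕ) : ℤ)) = (((e+1) + (a+b) : ℕ) : ℤ) from by
          push_cast; omega]
        rw [show ((n : ℤ) - (((d + 2) / 2 : ℕ) : ℤ)) = (((e+1) + (a+b-1) : ℕ) : ℤ) from by
          push_cast; omega]
        rw [show ((n : ℤ) - (d : ℤ)) = ((e + 1 : ℕ) : ℤ) from by push_cast; omega]
        rw [show (d + 1) / 2 = b + a from by omega, show d / 2 = b + a from by omega]
        rw [ichoose_natCast, ichoose_natCast, ichoose_natCast, ichoose_natCast]
        have key := even_key a b e (by omega)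
        have e1 : n = 2*a + 2*b + e + 1 := by omega
        have e2 : k + 1 = 2*a + b := by omega
        have qn : (n : ℚ) = 2*(a:ℚ) + 2*b + e + 1 := by exact_mod_cast e1
        have qk : (k : ℚ) + 1 = 2*(a:ℚ) + b := by exact_mod_cast e2
        have hden : (n : ℚ) - k - 1 = (b : ℚ) + e + 1 := by linarith
        have hdne : (n : ℚ) - k - 1 ≠ 0 := by rw [hden]; positivity
        rw [div_mul_eq_mul_div, div_eq_iff hdne]
        rw [hden, qn, show (k : ℚ) = 2*(a:ℚ) + b - 1 from by linarith]
        push_cast at key ⊢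
        linear_combination key
      · -- d = 2*m + 1
        have hm1 : 1 ≤ m := by omega
        set a := k + 1 - d / 2 with ha
        set b := d - k - 1 with hb
        set c := n - d - 1 with hc
        have hδ1 : deltaPar d = 1 := by unfold deltaPar; omega
        rw [hδ1]
        rw [show ((n : ℤ) - 1 - (((d - 2) / 2 + 1 : ℕ) : ℤ)) = ((a + (b + c) : ℕ) : ℤ) from by
          push_cast; omega]
        rw [show ((k : ℤ) + 1 - (((d - 2) / 2 + 1 : ℕ) : ℤ)) = ((a : ℕ) : ℤ) from by
          push_cast; omega]
        rw [show (2 * (((d - 2) / 2 + 1 : ℕ) : ℤ) - (k : ℤ) - 1 + ((1:ℕ) : ℤ))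
            = ((b : ℕ) : ℤ) from by push_cast; omega]
        rw [show ((n : ℤ) - (k : ℤ) - 1) = ((b + (c + 1) : ℕ) : ℤ) from by push_cast; omega]
        rw [show ((n : ℤ) - (((d + 1) / 2 : ℕ) : ℤ)) = (((c+1) + (a+b-1) : ℕ) : ℤ) from by
          push_cast; omega]
        rw [show ((n : ℤ) - (((d + 2) / 2 : ℕ) : ℤ)) = (((c+1) + (a+b-1) : ℕ) : ℤ) from by
          push_cast; omega]
        rw [show ((n : ℤ) - (d : ℤ)) = ((c + 1 : ℕ) : ℤ) from by push_cast; omega]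
        rw [show (d + 1) / 2 = b + a from by omega, show d / 2 = a + b - 1 from by omega]
        rw [ichoose_natCast, ichoose_natCast, ichoose_natCast]
        have key := odd_key a b c (by omega)
        have e1 : n = 2*a + 2*b + c := by omega
        have e2 : k + 2 = 2*a + b := by omega
        have qn : (n : ℚ) = 2*(a:ℚ) + 2*b + c := by exact_mod_cast e1
        have qk : (k : ℚ) + 2 = 2*(a:ℚ) + b := by exact_mod_cast e2
        have hden : (n : ℚ) - k - 1 = (b : ℚ) + c + 1 := by linarith
        have hdne : (n : ℚ) - k - 1 ≠ 0 := by rw [hden]; positivity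
        rw [div_mul_eq_mul_div, div_eq_iff hdne]
        rw [hden, qn, show (k : ℚ) = 2*(a:ℚ) + b - 2 from by linarith]
        push_cast at key ⊢
        linear_combination key
  rw [hKey]
  ring
end
end

section
/- For all integers n > d ≥ 2 and 0 ≤ k < ⌊d/2⌋, the rational number F(d,n,k) equals binom(n, k+1). -/
/-!
For `k < ⌊d/2⌋` only the terms with `j ≤ k + 1` survive. Writing `n = a + k + 2`, `s = k + 1`,
`δ = d mod 2` and reindexing by `i = s - j`, the sum becomes `∑ᵢ C(a+i, a) C(a+1, s+δ-2i)`, the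
coefficient of `X^(s+δ)` in `(1+X)^(a+1) (1-X²)^(-(a+1)) = (1-X)^(-(a+1))`, that is `C(a+s+δ, a)`.
The prefactor turns this into `C(n, k+1)` by absorption: `n C(n-1, k+1) = (n-k-1) C(n, k+1)` for
even `d`, and `(k+2) C(n, k+2) = (n-k-1) C(n, k+1)` for odd `d`.
-/

noncomputable section

open Finset PowerSeries

namespace PowerSeries

variable {R : Type*} [CommRing R]

theorem coeff_expand_mul_eq_sum (p : ℕ) (hp : p ≠ 0) (f g : R⟦X⟧) (t : ℕ) :
    coeff t (expand p hp f * g) = ∑ i ∈ range (t / p + 1), coeff i f * coeff (t - p * i) g := by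
  have hp0 := Nat.pos_of_ne_zero hp
  rw [coeff_mul, Nat.sum_antidiagonal_eq_sum_range_succ_mk]
  simp only [coeff_expand]
  symm
  refine sum_bij_ne_zero (fun i _ _ => p * i) (fun i hi _ => ?_) (fun i _ _ j _ _ hij => ?_)
    (fun j hj hne => ?_) (fun i _ _ => ?_)
  · rw [mem_range] at hi ⊢
    exact Nat.lt_succ_of_le
      ((Nat.mul_le_mul_left p (Nat.le_of_lt_succ hi)).trans (Nat.mul_div_le t p))
  · exact Nat.eq_of_mul_eq_mul_left hp0 hij
  · obtain ⟨i, rfl⟩ : p ∣ j := by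
      by_contra h
      simp [h] at hne
    refine ⟨i, ?_, ?_, rfl⟩
    · rw [mem_range] at hj ⊢
      exact Nat.lt_succ_of_le ((Nat.le_div_iff_mul_le hp0).2 (by linarith))
    · simpa [Nat.mul_div_cancel_left i hp0] using hne
  · simp [Nat.mul_div_cancel_left i hp0]

theorem one_add_X_pow_mul_expand_invOneSubPow (a : ℕ) :
    (1 + X : R⟦X⟧) ^ a * expand 2 two_ne_zero (invOneSubPow R a).val = (invOneSubPow R a).val := by
  set u := invOneSubPow R a
  have hexpand : expand 2 two_ne_zero u.inv = (1 - X) ^ a * (1 + X) ^ a := by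
    rw [invOneSubPow_inv_eq_one_sub_pow, map_pow, map_sub, map_one, expand_X, ← mul_pow]
    ring
  calc (1 + X : R⟦X⟧) ^ a * expand 2 two_ne_zero u.val
      = u.val * (expand 2 two_ne_zero u.inv * expand 2 two_ne_zero u.val) := by
        rw [hexpand, ← mul_assoc, ← mul_assoc, ← invOneSubPow_inv_eq_one_sub_pow, u.val_inv,
          one_mul]
    _ = u.val := by rw [← map_mul, u.inv_val, map_one, mul_one]

end PowerSeries

theorem Nat.sum_choose_mul_choose_sub_two_mul (a t : ℕ) :
    ∑ i ∈ range (t / 2 + 1), (a + i).choose a * (a + 1).choose (t - 2 * i) = (a + t).choose a := by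
  have hbinom : ∀ j, coeff j ((1 + X : ℤ⟦X⟧) ^ (a + 1)) = (a + 1).choose j := fun j => by
    rw [show (1 + X : ℤ⟦X⟧) ^ (a + 1) = ((1 + Polynomial.X) ^ (a + 1) : Polynomial ℤ) by simp,
      Polynomial.coeff_coe, Polynomial.coeff_one_add_X_pow]
  have h := congrArg (coeff t) (one_add_X_pow_mul_expand_invOneSubPow (R := ℤ) (a + 1))
  rw [mul_comm, coeff_expand_mul_eq_sum, invOneSubPow_val_succ_eq_mk_add_choose] at h
  simp only [coeff_mk, hbinom] at h
  exact_mod_cast h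

theorem ichoose_natCast_s6 (a b : ℕ) : ichoose a b = a.choose b := by
  unfold ichoose
  split_ifs with h
  · simp
  · rw [Nat.choose_eq_zero_of_lt (by omega), Nat.cast_zero]

theorem ichoose_of_neg (a : ℤ) {b : ℤ} (hb : b < 0) : ichoose a b = 0 :=
  if_neg (by omega)

theorem sum_ichoose_mul_ichoose_eq_choose (a s δ N : ℕ) (hδ : δ ≤ 1) (hN : s < N) :
    ∑ j ∈ range N, ichoose ((a + s : ℕ) - j) ((s : ℤ) - j) * ichoose (a + 1 : ℕ) (2 * j - s + δ) =
      (a + s + δ).choose a := by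
  have htail : ∀ j ∈ range N, j ∉ range (s + 1) →
      ichoose ((a + s : ℕ) - j) ((s : ℤ) - j) * ichoose (a + 1 : ℕ) (2 * j - s + δ) = 0 :=
    fun j _ hj => by rw [ichoose_of_neg _ (by simp at hj; omega), zero_mul]
  rw [← sum_subset (range_subset_range.2 hN) htail, ← sum_range_reflect, add_assoc,
    ← Nat.sum_choose_mul_choose_sub_two_mul, Nat.cast_sum]
  symm
  refine sum_subset_zero_on_sdiff (range_subset_range.2 (by omega)) (fun i hi => ?_)
    (fun i hi => ?_)
  · simp only [mem_sdiff, mem_range] at hi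
    rw [ichoose_of_neg ((a + 1 : ℕ) : ℤ) (by omega), mul_zero]
  · simp only [mem_range] at hi
    have hfirst : ichoose ((a + s : ℕ) - (s + 1 - 1 - i : ℕ)) ((s : ℤ) - (s + 1 - 1 - i : ℕ)) =
        (a + i).choose a := by
      rw [show ((a + s : ℕ) - (s + 1 - 1 - i : ℕ) : ℤ) = (a + i : ℕ) by omega,
        show ((s : ℤ) - (s + 1 - 1 - i : ℕ)) = (i : ℕ) by omega, ichoose_natCast_s6,
        Nat.choose_symm_add]
    have hsecond : ichoose (a + 1 : ℕ) (2 * (s + 1 - 1 - i : ℕ) - s + δ) =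
        (a + 1).choose (s + δ - 2 * i) := by
      rw [show (2 * (s + 1 - 1 - i : ℕ) - s + δ : ℤ) = (s + δ - 2 * i : ℕ) by omega,
        ichoose_natCast_s6]
    rw [hfirst, hsecond]
    push_cast
    ring

theorem deltaPar_eq_mod_two (d : ℕ) : deltaPar d = d % 2 := by
  unfold deltaPar
  omega

theorem Fcyc_eq_of_lt_half (d a k : ℕ) (hk : k < d / 2) :
    Fcyc d (a + (k + 1) + 1) k =
      ((a + (k + 1) + 1 : ℕ) - (d % 2 : ℕ) * a) / (a + 1) * (a + (k + 1) + d % 2).choose a := by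
  have hsum : ∑ j ∈ range (d / 2 + 1),
      (ichoose ((a + (k + 1) + 1 : ℕ) - 1 - j) (k + 1 - j) : ℚ) *
        ichoose ((a + (k + 1) + 1 : ℕ) - k - 1) (2 * j - k - 1 + (d % 2 : ℕ)) =
      (a + (k + 1) + d % 2).choose a := by
    rw [← Int.cast_natCast ((a + (k + 1) + d % 2).choose a),
      ← sum_ichoose_mul_ichoose_eq_choose a (k + 1) (d % 2) (d / 2 + 1) (by omega) (by omega)]
    simp only [Int.cast_sum, Int.cast_mul, Nat.cast_add, Nat.cast_one]
    refine sum_congr rfl fun j _ => ?_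
    congr 3 <;> ring
  unfold Fcyc
  rw [deltaPar_eq_mod_two, hsum]
  congr 2 <;> push_cast <;> ring

theorem cyclic_neighborly_general (d n k : ℕ) (hn : d < n) (hk : k < d / 2) :
    Fcyc d n k = (n.choose (k + 1) : ℚ) := by
  obtain ⟨a, rfl⟩ : ∃ a, n = a + (k + 1) + 1 := ⟨n - k - 2, by omega⟩
  rw [Fcyc_eq_of_lt_half d a k hk, div_mul_eq_mul_div, div_eq_iff (by positivity)]
  rcases Nat.mod_two_eq_zero_or_one d with hδ | hδ <;> rw [hδ]
  · have h := Nat.add_one_mul_choose_eq (a + (k + 1)) a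
    rw [Nat.choose_symm_of_eq_add (by ring : a + (k + 1) + 1 = (a + 1) + (k + 1))] at h
    qify at h
    push_cast at h ⊢
    linear_combination h
  · have h := Nat.choose_succ_right_eq (a + (k + 1) + 1) (k + 1)
    rw [Nat.choose_symm_of_eq_add (by ring : a + (k + 1) + 1 = (k + 1 + 1) + a),
      show a + (k + 1) + 1 - (k + 1) = a + 1 by omega] at h
    qify at h
    push_cast at h ⊢
    linear_combination h

/-- For `n > d ≥ 2` and `0 ≤ k < ⌊d/2⌋`, `F(d,n,k) = binom(n,k+1)`. -/
theorem cyclic_neighborly (d n k : ℕ) (hd : 2 ≤ d) (hn : d < n) (hk : k < d / 2) :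
    Fcyc d n k = (n.choose (k + 1) : ℚ) :=
  cyclic_neighborly_general d n k hn hk
end
end

section
/- For all integers n > d ≥ 2 and ⌊d/2⌋ − 1 ≤ k ≤ d−1, the rational identity F(d,n,k) − F(d−2,n,k) = [(n − δ(d)·(n−k−2)) / ⌈d/2⌉] · binom(n−⌊d/2⌋−1, n−d) · binom(⌈d/2⌉, d−k−1) holds. -/
/-
Lowering the dimension by two keeps the parity `δ(d)` and drops exactly the last summand
`j = ⌊d/2⌋` of the sum defining `F`, namely `binom(n-⌊d/2⌋-1, k+1-⌊d/2⌋) ⬝ binom(n-k-1, d-k-1)`.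
With `x = k+1-⌊d/2⌋`, `e = d-k-1`, `b = n-k-2` we have `⌈d/2⌉ = x+e`, `n-k-1 = b+1`, and by symmetry
`binom(n-⌊d/2⌋-1, n-d) = binom(x+b, x+e-1)`, so the claim is the factorial identity
`binom(x+b, x) ⬝ binom(b+1, e) / (b+1) = binom(x+b, x+e-1) ⬝ binom(x+e, e) / (x+e)`.
-/

noncomputable section

lemma ichoose_eq_choose {a b : ℤ} {A B : ℕ} (ha : a = A) (hb : b = B) :
    ichoose a b = A.choose B := by
  subst ha hb
  unfold ichoose
  split_ifs with h
  · simp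
  · rw [Nat.choose_eq_zero_of_lt (by omega), Nat.cast_zero]

lemma deltaPar_sub_two {d : ℕ} (hd : 2 ≤ d) : deltaPar (d - 2) = deltaPar d := by
  unfold deltaPar
  omega

lemma Fcyc_sub_Fcyc_sub_two (d n k : ℕ) (hd : 2 ≤ d) :
    Fcyc d n k - Fcyc (d - 2) n k =
      ((n : ℚ) - (deltaPar d : ℚ) * ((n : ℚ) - (k : ℚ) - 2)) / ((n : ℚ) - (k : ℚ) - 1) *
        ((ichoose ((n : ℤ) - 1 - ((d / 2 : ℕ) : ℤ)) ((k : ℤ) + 1 - ((d / 2 : ℕ) : ℤ)) : ℚ) *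
          (ichoose ((n : ℤ) - (k : ℤ) - 1) ((d : ℤ) - (k : ℤ) - 1) : ℚ)) := by
  have hlast : (d - 2) / 2 + 1 = d / 2 := by omega
  have hparity : 2 * ((d / 2 : ℕ) : ℤ) + (deltaPar d : ℤ) = d := by unfold deltaPar; omega
  simp only [Fcyc, deltaPar_sub_two hd, hlast]
  rw [Finset.sum_range_succ, mul_add, add_sub_cancel_left,
    show 2 * ((d / 2 : ℕ) : ℤ) - k - 1 + deltaPar d = d - k - 1 by omega]

lemma choose_mul_choose_div_succ (x b e : ℕ) (hxe : 1 ≤ x + e) (he : e ≤ b + 1) :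
    ((x + b).choose x * (b + 1).choose e : ℚ) / (b + 1) =
      (x + b).choose (x + e - 1) * (x + e).choose e / (x + e) := by
  obtain ⟨p, hp⟩ : ∃ p, x + e = p + 1 := ⟨x + e - 1, by omega⟩
  have hp' : (x : ℚ) + e = p + 1 := by exact_mod_cast hp
  rw [hp, Nat.add_sub_cancel, hp',
    Nat.cast_choose ℚ (show x ≤ x + b by omega), Nat.cast_choose ℚ he,
    Nat.cast_choose ℚ (show p ≤ x + b by omega), Nat.cast_choose ℚ (show e ≤ p + 1 by omega),
    show x + b - x = b by omega, show x + b - p = b + 1 - e by omega,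
    show p + 1 - e = x by omega, Nat.factorial_succ b, Nat.factorial_succ p]
  push_cast
  field_simp

/-- For `n > d ≥ 2` and `⌊d/2⌋ - 1 ≤ k ≤ d-1`,
`F(d,n,k) - F(d-2,n,k)
  = ((n - δ(d)(n-k-2)) / ⌈d/2⌉) ⬝ binom(n-⌊d/2⌋-1, n-d) ⬝ binom(⌈d/2⌉, d-k-1)`. -/
theorem cyclic_face_difference (d n k : ℕ) (hd : 2 ≤ d) (hn : d < n)
    (hk1 : d / 2 ≤ k + 1) (hk2 : k + 1 ≤ d) :
    Fcyc d n k - Fcyc (d - 2) n k =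
      ((n : ℚ) - (deltaPar d : ℚ) * ((n : ℚ) - (k : ℚ) - 2)) / (((d + 1) / 2 : ℕ) : ℚ) *
        (ichoose ((n : ℤ) - ((d / 2 : ℕ) : ℤ) - 1) ((n : ℤ) - (d : ℤ)) : ℚ) *
        (ichoose ((((d + 1) / 2 : ℕ)) : ℤ) ((d : ℤ) - (k : ℤ) - 1) : ℚ) := by
  obtain ⟨x, hx⟩ : ∃ x, x = k + 1 - d / 2 := ⟨_, rfl⟩
  obtain ⟨e, he⟩ : ∃ e, e = d - k - 1 := ⟨_, rfl⟩
  obtain ⟨b, hb⟩ : ∃ b, b = n - k - 2 := ⟨_, rfl⟩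
  have hbase : (n : ℚ) - k - 1 = b + 1 := by
    rw [show (n : ℚ) = k + 2 + b by exact_mod_cast (show n = k + 2 + b by omega)]; ring
  have hceil : (((d + 1) / 2 : ℕ) : ℚ) = x + e := by
    exact_mod_cast (show (d + 1) / 2 = x + e by omega)
  rw [Fcyc_sub_Fcyc_sub_two d n k hd, hbase, hceil,
    ichoose_eq_choose (A := x + b) (B := x) (by omega) (by omega),
    ichoose_eq_choose (A := b + 1) (B := e) (by omega) (by omega),
    ichoose_eq_choose (A := x + b) (B := b + 1 - e) (by omega) (by omega),
    ichoose_eq_choose (A := x + e) (B := e) (by omega) (by omega),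
    Nat.choose_symm_of_eq_add (show x + b = b + 1 - e + (x + e - 1) by omega)]
  calc _ = ((n : ℚ) - deltaPar d * ((n : ℚ) - k - 2)) *
        (((x + b).choose x * (b + 1).choose e : ℚ) / (b + 1)) := by push_cast; ring
    _ = _ := by rw [choose_mul_choose_div_succ x b e (by omega) (by omega)]; push_cast; ring
end
end

section
/- Let d ≥ 1, 0 ≤ k ≤ d−1, and ε > 0 be a real number. Then there exists a d-polytope P such that f_k(P) < (ρ(d, k) + ε) · f_0(P). -/
noncomputable section

/-- Euclidean space `ℝ^n`. -/
abbrev Euc (n : ℕ) : Type := EuclideanSpace ℝ (Fin n)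

/-- A polytope is the convex hull of finitely many points. -/
def IsPolytope {E : Type*} [NormedAddCommGroup E] [InnerProductSpace ℝ E] (P : Set E) : Prop :=
  ∃ V : Finset E, P = convexHull ℝ (V : Set E)

/-- `G` is a face of `P`: `P` itself, the empty set, or the intersection of `P` with a
supporting hyperplane. -/
def IsFace {E : Type*} [NormedAddCommGroup E] [InnerProductSpace ℝ E] (P G : Set E) : Prop :=
  G = P ∨ G = ∅ ∨ ∃ f : E →L[ℝ] ℝ, f ≠ 0 ∧ ∃ c : ℝ,
    (∀ x ∈ P, f x ≤ c) ∧ G = {x ∈ P | f x = c}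

/-- The (affine) dimension of a nonempty set. -/
noncomputable def dimSet {E : Type*} [NormedAddCommGroup E] [InnerProductSpace ℝ E]
    (s : Set E) : ℕ :=
  Module.finrank ℝ (affineSpan ℝ s).direction

/-- `G` is a `k`-dimensional face of `P`. -/
def IsKFace {E : Type*} [NormedAddCommGroup E] [InnerProductSpace ℝ E]
    (P : Set E) (k : ℕ) (G : Set E) : Prop :=
  IsFace P G ∧ G.Nonempty ∧ dimSet G = k

/-- `fVec P k` is the number of `k`-dimensional faces of `P`. -/
noncomputable def fVec {E : Type*} [NormedAddCommGroup E] [InnerProductSpace ℝ E]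
    (P : Set E) (k : ℕ) : ℕ :=
  {G | IsKFace P k G}.ncard

/-!
Take the product of `⌊d/2⌋` convex `n`-gons, and of a segment when `d` is odd, with the polygon
vertices on the parabola `y = x²`. The faces of a product are the products of faces of the factors,
so apart from the `O(n^(⌈d/2⌉-1))` faces containing a whole polygon, a `k`-face is a choice of
an edge in `k` factors and of a vertex in the others. An `n`-gon has as many edges as vertices and
the segment has one edge and two vertices, which makes `f_k = ρ(d,k) f_0 + O(f_0 / n)`.
-/

open Finset Module

def argmaxOn {α : Type*} (f : α → ℝ) (s : Finset α) : Finset α :=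
  {a ∈ s | ∀ b ∈ s, f b ≤ f a}

section Argmax

variable {α : Type*}

theorem argmaxOn_nonempty (f : α → ℝ) {s : Finset α} (hs : s.Nonempty) :
    (argmaxOn f s).Nonempty := by
  obtain ⟨a, ha, hmax⟩ := s.exists_max_image f hs
  exact ⟨a, mem_filter.2 ⟨ha, hmax⟩⟩

theorem le_of_mem_argmaxOn {f : α → ℝ} {s : Finset α} {a b : α} (ha : a ∈ argmaxOn f s)
    (hb : b ∈ s) : f b ≤ f a :=
  (mem_filter.1 ha).2 b hb

theorem lt_of_mem_argmaxOn_of_notMem {f : α → ℝ} {s : Finset α} {a b : α}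
    (ha : a ∈ argmaxOn f s) (hb : b ∈ s) (hb' : b ∉ argmaxOn f s) : f b < f a := by
  obtain ⟨c, hc, hbc⟩ := not_forall₂.1 fun h => hb' (mem_filter.2 ⟨hb, h⟩)
  exact (not_le.1 hbc).trans_le (le_of_mem_argmaxOn ha hc)

theorem argmaxOn_eq_filter_eq (f : α → ℝ) {s : Finset α} {c : ℝ}
    (hs : ∀ a ∈ s, f a ≤ c) (hc : ∃ a ∈ s, f a = c) :
    argmaxOn f s = {a ∈ s | f a = c} := by
  obtain ⟨a₀, ha₀, rfl⟩ := hc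
  ext a
  simp only [argmaxOn, mem_filter]
  exact and_congr_right fun ha => ⟨fun h => le_antisymm (hs a ha) (h a₀ ha₀),
    fun h b hb => h ▸ hs b hb⟩

theorem argmaxOn_image {β : Type*} [DecidableEq β] (f : β → ℝ) (g : α → β)
    (s : Finset α) :
    argmaxOn f (s.image g) = (argmaxOn (f ∘ g) s).image g := by
  simp [argmaxOn, filter_image]

theorem argmaxOn_univ_sum_pi {ι : Type*} [Fintype ι] [DecidableEq ι] {α : ι → Type*}
    [∀ i, Fintype (α i)] [∀ i, DecidableEq (α i)] (q : ∀ i, α i → ℝ) :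
    argmaxOn (fun t : ∀ i, α i => ∑ i, q i (t i)) univ =
      Fintype.piFinset fun i => argmaxOn (q i) univ := by
  ext t
  simp only [argmaxOn, mem_filter, mem_univ, true_and, forall_const, Fintype.mem_piFinset]
  refine ⟨fun ht i b => ?_, fun ht t' => sum_le_sum fun i _ => ht i (t' i)⟩
  have := ht (Function.update t i b)
  rwa [← Finset.add_sum_erase _ _ (mem_univ i), ← Finset.add_sum_erase _ _ (mem_univ i),
    Function.update_self, sum_congr rfl fun j hj => by
      rw [Function.update_of_ne (ne_of_mem_erase hj)], add_le_add_iff_right] at this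

end Argmax

section ConvexHull

variable {E : Type*} [AddCommGroup E] [Module ℝ E]

theorem convexHull_inter_level_eq (V : Finset E) (f : E →ₗ[ℝ] ℝ) {c : ℝ}
    (hV : ∀ v ∈ V, f v ≤ c) :
    {x ∈ convexHull ℝ (V : Set E) | f x = c} = convexHull ℝ ↑{v ∈ V | f v = c} := by
  refine subset_antisymm ?_ (convexHull_min ?_ ?_)
  · rintro x ⟨hx, hfx⟩
    obtain ⟨w, hw0, hw1, rfl⟩ := Finset.mem_convexHull'.1 hx
    have hslack : ∑ v ∈ V, w v * (c - f v) = 0 := by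
      simp only [mul_sub, sum_sub_distrib, ← sum_mul, hw1, map_sum, map_smul,
        smul_eq_mul] at hfx ⊢
      linarith
    have hzero : ∀ v ∈ V, w v ≠ 0 → f v = c := fun v hv hwv => by
      have := (sum_eq_zero_iff_of_nonneg fun u hu =>
        mul_nonneg (hw0 u hu) (sub_nonneg.2 (hV u hu))).1 hslack v hv
      linarith [(mul_eq_zero.1 this).resolve_left hwv]
    refine Finset.mem_convexHull'.2 ⟨w, fun v hv => hw0 v (mem_filter.1 hv).1, ?_, ?_⟩
    · rwa [sum_filter_of_ne hzero]
    · exact sum_filter_of_ne fun v hv h => hzero v hv fun h0 => h (by rw [h0, zero_smul])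
  · intro v hv
    obtain ⟨hv, hfv⟩ := mem_filter.1 hv
    exact ⟨subset_convexHull ℝ _ hv, hfv⟩
  · exact (convex_convexHull ℝ _).inter (convex_hyperplane f.isLinear c)

end ConvexHull

section Faces

variable {E : Type*} [NormedAddCommGroup E] [InnerProductSpace ℝ E]

theorem IsFace.exists_eq_convexHull_argmaxOn {V : Finset E} {G : Set E}
    (hG : IsFace (convexHull ℝ ↑V) G) (hne : G.Nonempty) :
    ∃ f : E →ₗ[ℝ] ℝ, G = convexHull ℝ (argmaxOn f V : Set E) := by
  rcases hG with rfl | rfl | ⟨f, -, c, hle, rfl⟩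
  · exact ⟨0, by simp [argmaxOn]⟩
  · exact absurd hne Set.not_nonempty_empty
  · have hV : ∀ v ∈ V, f v ≤ c := fun v hv => hle v (subset_convexHull ℝ _ hv)
    have hc : ∃ v ∈ V, f v = c := by
      by_contra! hlt
      obtain ⟨x, hx, hfx⟩ := hne
      have : convexHull ℝ (V : Set E) ⊆ {y | f y < c} :=
        convexHull_min (fun v hv => lt_of_le_of_ne (hV v hv) (hlt v hv))
          (convex_halfSpace_lt f.isLinear c)
      exact (this hx).ne hfx
    refine ⟨f, ?_⟩
    rw [argmaxOn_eq_filter_eq (⇑(f : E →ₗ[ℝ] ℝ)) hV hc]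
    exact convexHull_inter_level_eq V (f : E →ₗ[ℝ] ℝ) hV

theorem isFace_convexHull_argmaxOn {V : Finset E} (hV : V.Nonempty) {f : E →L[ℝ] ℝ}
    (hf : f ≠ 0) : IsFace (convexHull ℝ ↑V) (convexHull ℝ (argmaxOn f V : Set E)) := by
  obtain ⟨v₀, hv₀, hmax⟩ := V.exists_max_image f hV
  have hle : ∀ x ∈ convexHull ℝ (V : Set E), f x ≤ f v₀ :=
    fun x hx => convexHull_min hmax (convex_halfSpace_le f.isLinear (f v₀)) hx
  refine Or.inr (Or.inr ⟨f, hf, f v₀, hle, ?_⟩)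
  rw [argmaxOn_eq_filter_eq f hmax ⟨v₀, hv₀, rfl⟩]
  exact (convexHull_inter_level_eq V (f : E →ₗ[ℝ] ℝ) hmax).symm

end Faces

section Span

variable {k ι : Type*} [Field k] [Fintype ι] {V : ι → Type*}
  [∀ i, AddCommGroup (V i)] [∀ i, Module k (V i)]

theorem vectorSpan_pi [DecidableEq ι] {B : ∀ i, Set (V i)} (hB : ∀ i, (B i).Nonempty) :
    vectorSpan k (Set.univ.pi B) = Submodule.pi Set.univ fun i => vectorSpan k (B i) := by
  refine le_antisymm (Submodule.span_le.2 ?_) ?_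
  · rintro _ ⟨x, hx, y, hy, rfl⟩ i -
    exact vsub_mem_vectorSpan k (hx i trivial) (hy i trivial)
  · choose x₀ hx₀ using hB
    rw [← Submodule.iSup_map_single]
    refine iSup_le fun i => Submodule.map_le_iff_le_comap.2 (Submodule.span_le.2 ?_)
    rintro _ ⟨a, ha, b, hb, rfl⟩
    have hmem : ∀ c ∈ B i, Function.update x₀ i c ∈ Set.univ.pi B := fun c hc j _ => by
      rcases eq_or_ne j i with rfl | hj
      · simpa using hc
      · simpa [hj] using hx₀ j
    have h := vsub_mem_vectorSpan k (hmem a ha) (hmem b hb)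
    rwa [vsub_eq_sub, ← Function.update_sub, sub_self] at h

def Submodule.piEquiv (p : ∀ i, Submodule k (V i)) :
    Submodule.pi Set.univ p ≃ₗ[k] ∀ i, p i where
  toFun x i := ⟨x.1 i, x.2 i trivial⟩
  invFun y := ⟨fun i => y i, fun i _ => (y i).2⟩
  map_add' _ _ := rfl
  map_smul' _ _ := rfl
  left_inv _ := rfl
  right_inv _ := rfl

theorem Submodule.finrank_pi [∀ i, FiniteDimensional k (V i)] (p : ∀ i, Submodule k (V i)) :
    finrank k (Submodule.pi Set.univ p) = ∑ i, finrank k (p i) := by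
  rw [(Submodule.piEquiv p).finrank_eq, Module.finrank_pi_fintype]

end Span

theorem dimSet_convexHull {E : Type*} [NormedAddCommGroup E] [InnerProductSpace ℝ E]
    (s : Set E) :
    dimSet (convexHull ℝ s) = finrank ℝ (vectorSpan ℝ s) := by
  rw [dimSet, affineSpan_convexHull, direction_affineSpan]

theorem finrank_vectorSpan_image_linearEquiv {R M N : Type*} [Ring R] [AddCommGroup M]
    [Module R M] [AddCommGroup N] [Module R N] (e : M ≃ₗ[R] N) (s : Set M) :
    finrank R (vectorSpan R (e '' s)) = finrank R (vectorSpan R s) := by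
  rw [← e.finrank_map_eq]
  exact congrArg (fun p : Submodule R N => finrank R p)
    ((e : M →ₗ[R] N).toAffineMap.map_vectorSpan (s := s)).symm

def parabolaPoint (x : ℝ) : ℝ × ℝ := (x, x ^ 2)

theorem linearIndependent_parabolaPoint_sub {a b c : ℝ} (hab : a ≠ b) (hac : a ≠ c)
    (hbc : b ≠ c) :
    LinearIndependent ℝ
      ![parabolaPoint b - parabolaPoint a, parabolaPoint c - parabolaPoint a] := by
  rw [LinearIndependent.pair_iff]
  intro x y hxy
  simp only [parabolaPoint, Prod.mk_sub_mk, Prod.smul_mk, smul_eq_mul, Prod.mk_add_mk,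
    Prod.mk_eq_zero] at hxy
  obtain ⟨h1, h2⟩ := hxy
  have hy : y * ((c - a) * (c - b)) = 0 := by linear_combination h2 - (b + a) * h1
  have hy0 : y = 0 := by
    simpa [sub_ne_zero.2 hac.symm, sub_ne_zero.2 hbc.symm] using hy
  subst hy0
  exact ⟨by simpa [sub_ne_zero.2 hab.symm] using h1, rfl⟩

theorem finrank_vectorSpan_image_parabolaPoint {α : Type*} {x : α → ℝ}
    (hx : Function.Injective x) {A : Finset α} (hA : A.Nonempty) :
    finrank ℝ (vectorSpan ℝ ((parabolaPoint ∘ x) '' A)) = min (#A - 1) 2 := by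
  classical
  rcases Nat.lt_or_ge 2 #A with h3 | h2
  · obtain ⟨a, ha, b, hb, c, hc, hab, hac, hbc⟩ := two_lt_card.1 h3
    rw [show min (#A - 1) 2 = 2 by omega]
    refine le_antisymm ((Submodule.finrank_le _).trans (by simp)) ?_
    have hind := linearIndependent_parabolaPoint_sub (hx.ne hab) (hx.ne hac) (hx.ne hbc)
    rw [← Fintype.card_fin 2, ← finrank_span_eq_card hind]
    refine Submodule.finrank_mono (Submodule.span_le.2 ?_)
    rintro _ ⟨i, rfl⟩
    fin_cases i
    · exact vsub_mem_vectorSpan ℝ ⟨b, hb, rfl⟩ ⟨a, ha, rfl⟩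
    · exact vsub_mem_vectorSpan ℝ ⟨c, hc, rfl⟩ ⟨a, ha, rfl⟩
  · rcases (show #A = 1 ∨ #A = 2 by have := hA.card_pos; omega) with h1 | h2
    · obtain ⟨a, rfl⟩ := card_eq_one.1 h1
      simp
    · obtain ⟨a, b, hab, rfl⟩ := card_eq_two.1 h2
      rw [card_pair hab, coe_pair, Set.image_pair, vectorSpan_pair,
        finrank_span_singleton (by simp [parabolaPoint, sub_eq_zero, hx.ne hab])]
      rfl

section ParabolaChord

variable (g : ℝ × ℝ →ₗ[ℝ] ℝ)

theorem apply_parabolaPoint (x : ℝ) :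
    g (parabolaPoint x) = g (1, 0) * x + g (0, 1) * x ^ 2 := by
  have : parabolaPoint x = x • ((1 : ℝ), (0 : ℝ)) + x ^ 2 • ((0 : ℝ), (1 : ℝ)) := by
    simp [parabolaPoint]
  rw [this, map_add, map_smul, map_smul, smul_eq_mul, smul_eq_mul, mul_comm x, mul_comm (x ^ 2)]

theorem apply_parabolaPoint_chord (x y z : ℝ) :
    (z - x) * g (parabolaPoint y) =
      (z - y) * g (parabolaPoint x) + (y - x) * g (parabolaPoint z)
        - g (0, 1) * ((y - x) * (z - y) * (z - x)) := by
  simp only [apply_parabolaPoint]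
  ring

variable {g} {x y z m : ℝ}

theorem apply_parabolaPoint_lt_of_pos (hg : 0 < g (0, 1)) (hxy : x < y) (hyz : y < z)
    (hx : g (parabolaPoint x) ≤ m) (hz : g (parabolaPoint z) ≤ m) :
    g (parabolaPoint y) < m := by
  have := apply_parabolaPoint_chord g x y z
  have : 0 < g (0, 1) * ((y - x) * (z - y) * (z - x)) := by
    apply mul_pos hg; apply mul_pos (mul_pos _ _) <;> linarith
  nlinarith

theorem pos_of_apply_parabolaPoint_lt (hxy : x < y) (hyz : y < z)
    (hx : g (parabolaPoint x) = m) (hz : g (parabolaPoint z) = m)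
    (hy : g (parabolaPoint y) < m) : 0 < g (0, 1) := by
  have := apply_parabolaPoint_chord g x y z
  have hpos : 0 < (y - x) * (z - y) * (z - x) := by
    apply mul_pos (mul_pos _ _) <;> linarith
  by_contra! hg
  nlinarith [mul_nonpos_of_nonpos_of_nonneg hg hpos.le]

theorem apply_parabolaPoint_eq_of_three_eq (hxy : x ≠ y) (hxz : x ≠ z) (hyz : y ≠ z)
    (hx : g (parabolaPoint x) = m) (hy : g (parabolaPoint y) = m)
    (hz : g (parabolaPoint z) = m) (w : ℝ) : g (parabolaPoint w) = m := by
  have hchord := apply_parabolaPoint_chord g x y z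
  rw [hx, hy, hz] at hchord
  have hb : g (0, 1) = 0 := by
    have : g (0, 1) * ((y - x) * (z - y) * (z - x)) = 0 := by linarith
    simpa [sub_ne_zero.2 hxy.symm, sub_ne_zero.2 hyz.symm, sub_ne_zero.2 hxz.symm] using this
  rw [apply_parabolaPoint, hb] at hx hy ⊢
  have ha : g (1, 0) = 0 := by
    have : g (1, 0) * (x - y) = 0 := by linarith
    simpa [sub_ne_zero.2 hxy] using this
  rw [ha] at hx ⊢
  linarith

end ParabolaChord

def tangentFunctional (t : ℝ) : ℝ × ℝ →ₗ[ℝ] ℝ :=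
  (2 * t) • LinearMap.fst ℝ ℝ ℝ - LinearMap.snd ℝ ℝ ℝ

theorem tangentFunctional_parabolaPoint (t x : ℝ) :
    tangentFunctional t (parabolaPoint x) = t ^ 2 - (x - t) ^ 2 := by
  simp only [tangentFunctional, parabolaPoint, LinearMap.sub_apply, LinearMap.smul_apply,
    LinearMap.fst_apply, LinearMap.snd_apply, smul_eq_mul]
  ring

theorem argmaxOn_tangentFunctional {s : ℕ} (t : Fin s) :
    argmaxOn (fun u : Fin s => tangentFunctional (t : ℕ) (parabolaPoint (u : ℕ))) univ =
      {t} := by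
  ext u
  simp only [argmaxOn, mem_filter, mem_univ, true_and, true_implies, mem_singleton,
    tangentFunctional_parabolaPoint]
  refine ⟨fun h => Fin.ext ?_, fun h v => ?_⟩
  · have := h t
    have hsq : (((u : ℕ) : ℝ) - (t : ℕ)) ^ 2 = 0 := by
      nlinarith [sq_nonneg (((u : ℕ) : ℝ) - (t : ℕ))]
    exact_mod_cast sub_eq_zero.1 (pow_eq_zero_iff two_ne_zero |>.1 hsq)
  · subst h
    nlinarith [sq_nonneg (((v : ℕ) : ℝ) - (u : ℕ))]

open scoped Classical in
/-- The vertex sets of the nonempty faces of the polygon with vertices `(u, u²)`, `u < s`. -/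
def parabolaFaces (s : ℕ) : Finset (Finset (Fin s)) :=
  {A | ∃ g : ℝ × ℝ →ₗ[ℝ] ℝ,
    A = argmaxOn (fun u : Fin s => g (parabolaPoint (u : ℕ))) univ}

section ParabolaFaces

variable {s : ℕ} {A : Finset (Fin s)}

theorem mem_parabolaFaces :
    A ∈ parabolaFaces s ↔
      ∃ g : ℝ × ℝ →ₗ[ℝ] ℝ,
        A = argmaxOn (fun u : Fin s => g (parabolaPoint (u : ℕ))) univ := by
  simp [parabolaFaces]

theorem nonempty_of_mem_parabolaFaces (hs : 0 < s) (hA : A ∈ parabolaFaces s) :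
    A.Nonempty := by
  obtain ⟨g, rfl⟩ := mem_parabolaFaces.1 hA
  exact argmaxOn_nonempty _ ⟨⟨0, hs⟩, mem_univ _⟩

theorem eq_univ_of_mem_parabolaFaces (hA : A ∈ parabolaFaces s) (h3 : 2 < #A) : A = univ := by
  obtain ⟨g, rfl⟩ := mem_parabolaFaces.1 hA
  obtain ⟨x, hx, y, hy, z, hz, hxy, hxz, hyz⟩ := two_lt_card.1 h3
  simp only [argmaxOn, mem_filter, mem_univ, true_and, forall_const] at hx hy hz
  have hcast : ∀ {u v : Fin s}, u ≠ v → ((u : ℕ) : ℝ) ≠ (v : ℕ) := fun h =>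
    (Nat.cast_injective.comp Fin.val_injective).ne h
  have hconst := apply_parabolaPoint_eq_of_three_eq (hcast hxy) (hcast hxz) (hcast hyz) rfl
    (le_antisymm (hx y) (hy x)) (le_antisymm (hx z) (hz x))
  exact eq_univ_of_forall fun w => by simp [argmaxOn, hconst]

def polygonEdge (u : Fin s) : Finset (Fin s) := {u, ⟨(u + 1) % s, Nat.mod_lt _ u.pos⟩}

theorem exists_eq_polygonEdge_of_mem_parabolaFaces (hA : A ∈ parabolaFaces s) (h2 : #A = 2) :
    ∃ u, A = polygonEdge u := by
  obtain ⟨g, rfl⟩ := mem_parabolaFaces.1 hA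
  set q : Fin s → ℝ := fun u => g (parabolaPoint (u : ℕ))
  obtain ⟨x, y, hxy, hA2⟩ := card_eq_two.1 h2
  wlog hlt : x < y generalizing x y
  · exact this y x hxy.symm (by rw [hA2, pair_comm]) (lt_of_le_of_ne (not_lt.1 hlt) hxy.symm)
  have hxA : x ∈ argmaxOn q univ := hA2 ▸ mem_insert_self x {y}
  have hyA : y ∈ argmaxOn q univ := hA2 ▸ mem_insert_of_mem (mem_singleton_self y)
  have hqxy : q x = q y :=
    le_antisymm (le_of_mem_argmaxOn hyA (mem_univ x)) (le_of_mem_argmaxOn hxA (mem_univ y))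
  have hlt' : (x : ℕ) < y := hlt
  by_cases hadj : (y : ℕ) = x + 1
  · exact ⟨x, hA2.trans (by simp only [polygonEdge, ← hadj, Nat.mod_eq_of_lt y.isLt])⟩
  -- The vertex after `x` lies strictly below the two maximizers, so the quadratic `q` is
  -- strictly convex and can only attain its maximum at the first and the last vertex.
  have hw : q ⟨x + 1, by omega⟩ < q x := lt_of_mem_argmaxOn_of_notMem hxA (mem_univ _)
    (by rw [hA2]; simp only [mem_insert, mem_singleton, Fin.ext_iff]; omega)
  have hg : 0 < g (0, 1) := pos_of_apply_parabolaPoint_lt (x := (x : ℕ)) (y := (x + 1 : ℕ))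
    (z := (y : ℕ)) (by simp) (by exact_mod_cast (by omega : (x : ℕ) + 1 < y)) rfl hqxy.symm
    (by simpa [q] using hw)
  have hx0 : (x : ℕ) = 0 := by
    by_contra h0
    exact (apply_parabolaPoint_lt_of_pos (x := 0) (y := (x : ℕ)) (z := (y : ℕ)) hg
      (by exact_mod_cast Nat.pos_of_ne_zero h0) (by exact_mod_cast hlt')
      (by simpa [q] using le_of_mem_argmaxOn hxA (mem_univ ⟨0, by omega⟩)) hqxy.symm.le).false
  have hys : (y : ℕ) + 1 = s := by
    by_contra hs
    exact (apply_parabolaPoint_lt_of_pos (x := (x : ℕ)) (y := (y : ℕ)) (z := (s - 1 : ℕ)) hg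
      (by exact_mod_cast hlt') (by exact_mod_cast (by omega : (y : ℕ) < s - 1)) hqxy.le
      (by simpa [q] using le_of_mem_argmaxOn hyA (mem_univ ⟨s - 1, by omega⟩))).false
  refine ⟨y, hA2.trans ?_⟩
  simp only [polygonEdge, hys, Nat.mod_self]
  rw [pair_comm]
  congr
  exact Fin.ext hx0

theorem card_parabolaFaces_dim_zero_le (hs : 0 < s) :
    #{A ∈ parabolaFaces s | min (#A - 1) 2 = 0} ≤ s := by
  calc _ ≤ #(powersetCard 1 (univ : Finset (Fin s))) := by
        refine card_le_card fun A hA => ?_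
        obtain ⟨hA, h0⟩ := mem_filter.1 hA
        have := (nonempty_of_mem_parabolaFaces hs hA).card_pos
        exact mem_powersetCard.2 ⟨subset_univ _, by omega⟩
    _ = s := by simp

theorem card_parabolaFaces_dim_one_le :
    #{A ∈ parabolaFaces s | min (#A - 1) 2 = 1} ≤ min s (s.choose 2) := by
  refine le_min ?_ ?_
  · calc _ ≤ #((univ : Finset (Fin s)).image polygonEdge) := by
          refine card_le_card fun A hA => ?_
          obtain ⟨hA, h1⟩ := mem_filter.1 hA
          obtain ⟨u, rfl⟩ := exists_eq_polygonEdge_of_mem_parabolaFaces hA (by omega)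
          exact mem_image_of_mem _ (mem_univ u)
      _ ≤ s := card_image_le.trans_eq (by simp)
  · calc _ ≤ #(powersetCard 2 (univ : Finset (Fin s))) :=
          card_le_card fun A hA => mem_powersetCard.2 ⟨subset_univ _, by
            have := (mem_filter.1 hA).2; omega⟩
      _ = s.choose 2 := by simp

theorem card_parabolaFaces_dim_two_le :
    #{A ∈ parabolaFaces s | 2 ≤ min (#A - 1) 2} ≤ if 3 ≤ s then 1 else 0 := by
  have hsub : {A ∈ parabolaFaces s | 2 ≤ min (#A - 1) 2} ⊆ {univ} := fun A hA => by
    obtain ⟨hA, h2⟩ := mem_filter.1 hA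
    exact mem_singleton.2 (eq_univ_of_mem_parabolaFaces hA (by omega))
  split_ifs with h3
  · exact (card_le_card hsub).trans_eq (card_singleton _)
  · refine (card_eq_zero.2 (filter_eq_empty_iff.2 fun A _ => ?_)).le
    have := (card_le_univ A).trans_eq (Fintype.card_fin s)
    omega

theorem card_parabolaFaces_le (hs : 0 < s) : #(parabolaFaces s) ≤ 3 * s := by
  have hsplit : parabolaFaces s ⊆ {A ∈ parabolaFaces s | min (#A - 1) 2 = 0} ∪
      {A ∈ parabolaFaces s | min (#A - 1) 2 = 1} ∪
      {A ∈ parabolaFaces s | 2 ≤ min (#A - 1) 2} := fun A hA => by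
    simp only [mem_union, mem_filter, hA, true_and]
    omega
  have h0 := card_parabolaFaces_dim_zero_le hs
  have h1 := (card_parabolaFaces_dim_one_le (s := s)).trans (min_le_left _ _)
  have h2 := (card_parabolaFaces_dim_two_le (s := s)).trans
    (show (if 3 ≤ s then 1 else 0) ≤ s by split_ifs <;> omega)
  have := (card_le_card hsplit).trans
    ((card_union_le _ _).trans (Nat.add_le_add_right (card_union_le _ _) _))
  omega

end ParabolaFaces

theorem card_filter_sum_eq_le {ι : Type*} [Fintype ι] [DecidableEq ι] {α : ι → Type*}
    (S : ∀ i, Finset (α i)) (δ : ∀ i, α i → ℕ) (k : ℕ) :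
    #{x ∈ Fintype.piFinset S | ∑ i, δ i (x i) = k} ≤
      ∑ J ∈ powersetCard k univ, ∏ i, #{a ∈ S i | δ i a = if i ∈ J then 1 else 0} +
        ∑ i, #{a ∈ S i | 2 ≤ δ i a} * ∏ j ∈ univ.erase i, #(S j) := by
  classical
  calc _ ≤ #((powersetCard k univ).biUnion
          (fun J => Fintype.piFinset fun i => {a ∈ S i | δ i a = if i ∈ J then 1 else 0}) ∪
        univ.biUnion fun i =>
          Fintype.piFinset (Function.update S i {a ∈ S i | 2 ≤ δ i a})) := by
        refine card_le_card fun x hx => ?_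
        obtain ⟨hxS, hxk⟩ := mem_filter.1 hx
        rw [Fintype.mem_piFinset] at hxS
        rw [mem_union, mem_biUnion, mem_biUnion]
        by_cases hle : ∀ i, δ i (x i) ≤ 1
        · refine Or.inl ⟨({i | δ i (x i) = 1} : Finset ι),
            mem_powersetCard.2 ⟨subset_univ _, ?_⟩, ?_⟩
          · rw [card_filter, ← hxk]
            exact sum_congr rfl fun i _ => by have := hle i; split_ifs <;> omega
          · refine Fintype.mem_piFinset.2 fun i => mem_filter.2 ⟨hxS i, ?_⟩
            have := hle i
            simp only [mem_filter, mem_univ, true_and]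
            split_ifs <;> omega
        · obtain ⟨i, hi⟩ := not_forall.1 hle
          refine Or.inr ⟨i, mem_univ _, Fintype.mem_piFinset.2 fun j => ?_⟩
          rcases eq_or_ne j i with rfl | hj
          · simpa using ⟨hxS j, by omega⟩
          · simpa [hj] using hxS j
    _ ≤ _ := by
        refine (card_union_le _ _).trans (add_le_add (card_biUnion_le.trans_eq ?_)
          (card_biUnion_le.trans_eq ?_))
        · simp only [Fintype.card_piFinset]
        · refine sum_congr rfl fun i _ => ?_
          rw [Fintype.card_piFinset, ← mul_prod_erase _ _ (mem_univ i), Function.update_self]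
          exact congrArg _ (prod_congr rfl fun j hj => by
            rw [Function.update_of_ne (ne_of_mem_erase hj)])

theorem card_filter_notMem_powersetCard {α : Type*} [DecidableEq α] {s : Finset α} {a : α}
    (ha : a ∈ s) (k : ℕ) : #{J ∈ powersetCard k s | a ∉ J} = (#s - 1).choose k := by
  rw [← card_erase_of_mem ha, ← card_powersetCard]
  congr 1
  ext J
  simp only [mem_filter, mem_powersetCard, subset_erase]
  tauto

theorem mul_sum_mul_prod_erase_le {ι : Type*} [Fintype ι] [DecidableEq ι] {s c : ι → ℕ}
    {n : ℕ} (hc : ∀ i, n * c i ≤ s i) :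
    n * ∑ i, c i * ∏ j ∈ univ.erase i, 3 * s j ≤
      Fintype.card ι * 3 ^ (Fintype.card ι - 1) * ∏ i, s i := by
  rw [mul_sum, mul_assoc, ← smul_eq_mul, ← card_univ, ← sum_const]
  refine sum_le_sum fun i _ => ?_
  rw [prod_mul_distrib, prod_const, card_erase_of_mem (mem_univ i),
    ← mul_prod_erase _ _ (mem_univ i)]
  calc n * (c i * (3 ^ (#univ - 1) * ∏ j ∈ univ.erase i, s j))
      = (n * c i) * (3 ^ (#univ - 1) * ∏ j ∈ univ.erase i, s j) := by ring
    _ ≤ s i * (3 ^ (#univ - 1) * ∏ j ∈ univ.erase i, s j) := Nat.mul_le_mul_right _ (hc i)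
    _ = 3 ^ (#univ - 1) * (s i * ∏ j ∈ univ.erase i, s j) := by ring

theorem min_choose_two_self {n : ℕ} (hn : 3 ≤ n) : min n (n.choose 2) = n := by
  refine min_eq_left ?_
  rw [Nat.choose_two_right, Nat.le_div_iff_mul_le two_pos]
  exact Nat.mul_le_mul_left n (by omega)

section ProductOfPolygons

variable {ι : Type*} [Fintype ι] [DecidableEq ι] {E : Type*} [NormedAddCommGroup E]
  [InnerProductSpace ℝ E] (e : (ι → ℝ × ℝ) ≃ₗ[ℝ] E) (s : ι → ℕ)

def productVertex (t : ∀ i, Fin (s i)) : E := e fun i => parabolaPoint (t i : ℕ)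

open scoped Classical in
def productFace (A : ∀ i, Finset (Fin (s i))) : Set E :=
  convexHull ℝ ↑((Fintype.piFinset A).image (productVertex e s))

theorem isPolytope_productFace (A : ∀ i, Finset (Fin (s i))) : IsPolytope (productFace e s A) :=
  ⟨_, rfl⟩

theorem apply_productVertex (f : E →ₗ[ℝ] ℝ) (t : ∀ i, Fin (s i)) :
    f (productVertex e s t) = ∑ i, f (e (Pi.single i (parabolaPoint (t i : ℕ)))) := by
  rw [productVertex, ← Finset.univ_sum_single fun i => parabolaPoint (t i : ℕ), map_sum,
    map_sum]

theorem dimSet_productFace {A : ∀ i, Finset (Fin (s i))} (hA : ∀ i, (A i).Nonempty) :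
    dimSet (productFace e s A) = ∑ i, min (#(A i) - 1) 2 := by
  classical
  have himage : productVertex e s '' Set.univ.pi (fun i => ↑(A i)) =
      e '' Set.univ.pi fun i =>
        (parabolaPoint ∘ fun u : Fin (s i) => ((u : ℕ) : ℝ)) '' ↑(A i) := by
    rw [← Set.piMap_image_univ_pi, Set.image_image]
    rfl
  rw [productFace, dimSet_convexHull, coe_image, Fintype.coe_piFinset, himage,
    finrank_vectorSpan_image_linearEquiv, vectorSpan_pi fun i => (coe_nonempty.2 (hA i)).image _,
    Submodule.finrank_pi]
  exact sum_congr rfl fun i _ =>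
    finrank_vectorSpan_image_parabolaPoint (Nat.cast_injective.comp Fin.val_injective) (hA i)

theorem IsFace.exists_eq_productFace {G : Set E} (hG : IsFace (productFace e s fun _ => univ) G)
    (hne : G.Nonempty) :
    ∃ A ∈ Fintype.piFinset fun i => parabolaFaces (s i), G = productFace e s A := by
  classical
  rw [productFace, Fintype.piFinset_univ] at hG
  obtain ⟨f, rfl⟩ := hG.exists_eq_convexHull_argmaxOn hne
  set g : ι → ℝ × ℝ →ₗ[ℝ] ℝ :=
    fun i => f ∘ₗ e.toLinearMap ∘ₗ LinearMap.single ℝ (fun _ => ℝ × ℝ) i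
  refine ⟨fun i => argmaxOn (fun u => g i (parabolaPoint (u : ℕ))) univ,
    Fintype.mem_piFinset.2 fun i => mem_parabolaFaces.2 ⟨g i, rfl⟩, ?_⟩
  rw [productFace, argmaxOn_image, ← argmaxOn_univ_sum_pi]
  congr
  funext t
  exact apply_productVertex e s f t

omit [Fintype ι] [DecidableEq ι] in
theorem productVertex_injective : Function.Injective (productVertex e s) := fun t t' h => by
  funext i
  have := congrArg (fun x => (x i).1) (e.injective h)
  simp only [parabolaPoint] at this
  exact Fin.ext (by exact_mod_cast this)

theorem isKFace_productFace_singleton [Nonempty ι] (t : ∀ i, Fin (s i)) :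
    IsKFace (productFace e s fun _ => univ) 0 {productVertex e s t} := by
  classical
  have : FiniteDimensional ℝ E := e.finiteDimensional
  set g : ι → ℝ × ℝ →ₗ[ℝ] ℝ := fun i => tangentFunctional (t i : ℕ)
  set f : E →L[ℝ] ℝ := LinearMap.toContinuousLinearMap
    ((∑ i, g i ∘ₗ LinearMap.proj i) ∘ₗ e.symm.toLinearMap)
  have hblock : ∀ i v, f (e (Pi.single i v)) = g i v := fun i v => by
    simp [f, Pi.single_apply, apply_ite (g _)]
  have hargmax : argmaxOn f (univ.image (productVertex e s)) = {productVertex e s t} := by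
    have hf : ⇑f ∘ productVertex e s = fun t' => ∑ i, g i (parabolaPoint (t' i : ℕ)) :=
      funext fun t' => by
        rw [Function.comp_apply, ← ContinuousLinearMap.coe_coe, apply_productVertex]
        exact sum_congr rfl fun i _ => hblock i _
    rw [argmaxOn_image, hf,
      argmaxOn_univ_sum_pi fun i (u : Fin (s i)) => g i (parabolaPoint (u : ℕ))]
    simp only [g, argmaxOn_tangentFunctional, Fintype.piFinset_singleton, image_singleton]
  have hf0 : f ≠ 0 := fun h0 => by
    obtain ⟨i⟩ := ‹Nonempty ι›
    simpa [g, tangentFunctional] using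
      (hblock i (0, 1)).symm.trans (congrArg (· (e (Pi.single i (0, 1)))) h0)
  refine ⟨?_, Set.singleton_nonempty _, ?_⟩
  · have :=
      isFace_convexHull_argmaxOn ⟨_, mem_image_of_mem (productVertex e s) (mem_univ t)⟩ hf0
    rwa [hargmax, coe_singleton, convexHull_singleton, ← Fintype.piFinset_univ] at this
  · rw [dimSet, direction_affineSpan, vectorSpan_singleton, finrank_bot]

theorem setOf_isKFace_productFace_subset (hs : ∀ i, 0 < s i) (k : ℕ) :
    {G | IsKFace (productFace e s fun _ => univ) k G} ⊆ productFace e s ''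
      ↑{A ∈ Fintype.piFinset fun i => parabolaFaces (s i) | ∑ i, min (#(A i) - 1) 2 = k} := by
  rintro G ⟨hG, hne, hdim⟩
  obtain ⟨A, hA, rfl⟩ := hG.exists_eq_productFace e s hne
  have hAne i := nonempty_of_mem_parabolaFaces (hs i) (Fintype.mem_piFinset.1 hA i)
  exact ⟨A, mem_filter.2 ⟨hA, (dimSet_productFace e s hAne).symm.trans hdim⟩, rfl⟩

theorem fVec_productFace_le (hs : ∀ i, 0 < s i) (k : ℕ) :
    fVec (productFace e s fun _ => univ) k ≤
      #{A ∈ Fintype.piFinset fun i => parabolaFaces (s i) | ∑ i, min (#(A i) - 1) 2 = k} :=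
  ((Set.ncard_le_ncard (setOf_isKFace_productFace_subset e s hs k)).trans
    (Set.ncard_image_le (Finset.finite_toSet _))).trans_eq (Set.ncard_coe_finset _)

theorem prod_le_fVec_productFace_zero [Nonempty ι] (hs : ∀ i, 0 < s i) :
    ∏ i, s i ≤ fVec (productFace e s fun _ => univ) 0 := by
  have hsub : Set.range (fun t => {productVertex e s t}) ⊆
      {G | IsKFace (productFace e s fun _ => univ) 0 G} := by
    rintro _ ⟨t, rfl⟩
    exact isKFace_productFace_singleton e s t
  have hfin := ((Finset.finite_toSet _).image _).subset (setOf_isKFace_productFace_subset e s hs 0)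
  calc ∏ i, s i = (Set.range fun t => ({productVertex e s t} : Set E)).ncard := by
        rw [Set.ncard_range_of_injective fun t t' h =>
          productVertex_injective e s (Set.singleton_injective h)]
        simp
    _ ≤ _ := Set.ncard_le_ncard hsub hfin

theorem fVec_productFace_le_sum (hs : ∀ i, 0 < s i) (k : ℕ) :
    fVec (productFace e s fun _ => univ) k ≤
      ∑ J ∈ powersetCard k univ, ∏ i, (if i ∈ J then min (s i) ((s i).choose 2) else s i) +
        ∑ i, (if 3 ≤ s i then 1 else 0) * ∏ j ∈ univ.erase i, 3 * s j := by
  refine (fVec_productFace_le e s hs k).trans ((card_filter_sum_eq_le (fun i => parabolaFaces (s i))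
    (fun _ A => min (#A - 1) 2) k).trans ?_)
  refine add_le_add (sum_le_sum fun J _ => prod_le_prod (fun _ _ => Nat.zero_le _) fun i _ => ?_)
    (sum_le_sum fun i _ => Nat.mul_le_mul card_parabolaFaces_dim_two_le
      (prod_le_prod (fun _ _ => Nat.zero_le _) fun j _ => card_parabolaFaces_le (hs j)))
  split_ifs
  · exact card_parabolaFaces_dim_one_le
  · exact card_parabolaFaces_dim_zero_le (hs i)

end ProductOfPolygons

/-- `⌊d/2⌋` polygons with `n` vertices, together with a segment when `d` is odd. -/
def polygonSizes (d n : ℕ) (i : Fin ((d + 1) / 2)) : ℕ := if 2 * (i : ℕ) + 1 = d then 2 else n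

section PolygonSizes

variable {d n : ℕ}

theorem polygonSizes_pos (hn : 0 < n) (i : Fin ((d + 1) / 2)) : 0 < polygonSizes d n i := by
  unfold polygonSizes
  split_ifs <;> omega

theorem polygonSizes_two_mul (m : ℕ) (i : Fin ((2 * m + 1) / 2)) :
    polygonSizes (2 * m) n i = n :=
  if_neg (by omega)

theorem polygonSizes_two_mul_add_one_of_ne {m : ℕ} {i : Fin ((2 * m + 1 + 1) / 2)}
    (hi : (i : ℕ) ≠ m) : polygonSizes (2 * m + 1) n i = n :=
  if_neg (by omega)

theorem polygonSizes_two_mul_add_one_self (m : ℕ) :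
    polygonSizes (2 * m + 1) n ⟨m, by omega⟩ = 2 :=
  if_pos rfl

theorem sum_min_polygonSizes (hn : 3 ≤ n) : ∑ i, min (polygonSizes d n i - 1) 2 = d := by
  rcases Nat.even_or_odd' d with ⟨m, rfl | rfl⟩
  · simp only [polygonSizes_two_mul, sum_const, card_univ, Fintype.card_fin, smul_eq_mul,
      show min (n - 1) 2 = 2 by omega]
    omega
  · rw [← add_sum_erase _ _ (mem_univ ⟨m, by omega⟩), polygonSizes_two_mul_add_one_self,
      sum_congr rfl fun i hi => by
        rw [polygonSizes_two_mul_add_one_of_ne (Fin.val_ne_of_ne (ne_of_mem_erase hi))],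
      sum_const, card_erase_of_mem (mem_univ _), card_univ, Fintype.card_fin, smul_eq_mul,
      show min (n - 1) 2 = 2 by omega]
    omega

theorem two_mul_sum_prod_polygonSizes (hn : 3 ≤ n) (k : ℕ) :
    2 * ∑ J ∈ powersetCard k univ, ∏ i, (if i ∈ J then min (polygonSizes d n i)
      ((polygonSizes d n i).choose 2) else polygonSizes d n i) =
      (((d + 1) / 2).choose k + (d / 2).choose k) * ∏ i, polygonSizes d n i := by
  rcases Nat.even_or_odd' d with ⟨m, rfl | rfl⟩
  · simp only [polygonSizes_two_mul, min_choose_two_self hn, ite_self, prod_const, sum_const,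
      card_univ, Fintype.card_fin, card_powersetCard, smul_eq_mul]
    rw [show (2 * m + 1) / 2 = m by omega, show 2 * m / 2 = m by omega]
    ring
  · set i₀ : Fin ((2 * m + 1 + 1) / 2) := ⟨m, by omega⟩
    have hs : ∀ i ∈ univ.erase i₀, polygonSizes (2 * m + 1) n i = n := fun i hi =>
      polygonSizes_two_mul_add_one_of_ne (Fin.val_ne_of_ne (ne_of_mem_erase hi))
    have hs₀ : polygonSizes (2 * m + 1) n i₀ = 2 := polygonSizes_two_mul_add_one_self m
    have hcard : #(univ.erase i₀) = m := by simp [card_erase_of_mem]; omega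
    have hprod : ∀ J : Finset (Fin ((2 * m + 1 + 1) / 2)),
        ∏ i, (if i ∈ J then min (polygonSizes (2 * m + 1) n i)
          ((polygonSizes (2 * m + 1) n i).choose 2) else polygonSizes (2 * m + 1) n i) =
        (1 + if i₀ ∉ J then 1 else 0) * n ^ m := fun J => by
      rw [← mul_prod_erase _ _ (mem_univ i₀), prod_congr rfl fun i hi => by
        rw [hs i hi, min_choose_two_self hn, ite_self], prod_const, hcard, hs₀]
      by_cases h : i₀ ∈ J <;> simp [h]
    rw [sum_congr rfl fun J _ => hprod J, ← sum_mul, sum_add_distrib, ← card_filter,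
      card_filter_notMem_powersetCard (mem_univ i₀), ← mul_prod_erase _ _ (mem_univ i₀),
      prod_congr rfl hs, prod_const, hcard, hs₀]
    simp only [sum_const, card_powersetCard, card_univ, Fintype.card_fin, smul_eq_mul, mul_one]
    rw [show (2 * m + 1 + 1) / 2 = m + 1 by omega, show (2 * m + 1) / 2 = m by omega,
      Nat.add_sub_cancel]
    ring

end PolygonSizes

theorem fVec_productFace_polygonSizes_lt {E : Type*} [NormedAddCommGroup E]
    [InnerProductSpace ℝ E] {d n : ℕ} (e : (Fin ((d + 1) / 2) → ℝ × ℝ) ≃ₗ[ℝ] E)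
    (hd : 1 ≤ d) (hn : 3 ≤ n) (k : ℕ) {ε : ℝ}
    (hnε : (((d + 1) / 2 * 3 ^ ((d + 1) / 2 - 1) : ℕ) : ℝ) < ε * n) :
    (fVec (productFace e (polygonSizes d n) fun _ => univ) k : ℝ) <
      (rho d k + ε) * fVec (productFace e (polygonSizes d n) fun _ => univ) 0 := by
  have hs := polygonSizes_pos (d := d) (by omega : 0 < n)
  have : Nonempty (Fin ((d + 1) / 2)) := ⟨⟨0, by omega⟩⟩
  have hk := fVec_productFace_le_sum e _ hs k
  have hX := two_mul_sum_prod_polygonSizes (d := d) hn k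
  have hY := mul_sum_mul_prod_erase_le (n := n) (s := polygonSizes d n)
    (c := fun i => if 3 ≤ polygonSizes d n i then 1 else 0) fun i => by
      unfold polygonSizes; split_ifs <;> omega
  have h0 := prod_le_fVec_productFace_zero e (polygonSizes d n) hs
  rw [Fintype.card_fin] at hY
  set P := ∏ i, polygonSizes d n i
  set X := ∑ J ∈ powersetCard k univ, ∏ i, (if i ∈ J then min (polygonSizes d n i)
      ((polygonSizes d n i).choose 2) else polygonSizes d n i)
  set Y := ∑ i, (if 3 ≤ polygonSizes d n i then 1 else 0) *
    ∏ j ∈ univ.erase i, 3 * polygonSizes d n j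
  have hn0 : (0 : ℝ) < n := by exact_mod_cast (by omega : 0 < n)
  have hε : 0 < ε := pos_of_mul_pos_left ((Nat.cast_nonneg _).trans_lt hnε) hn0.le
  have hP : (0 : ℝ) < P := by exact_mod_cast prod_pos fun i _ => hs i
  have hXρ : (X : ℝ) = rho d k * P := by
    have : (2 * X : ℝ) = (((d + 1) / 2).choose k + (d / 2).choose k : ℕ) * P := by
      exact_mod_cast hX
    rw [rho]
    push_cast at this ⊢
    linarith
  have hYε : (Y : ℝ) < ε * P := by
    have hY' : (n * Y : ℝ) ≤ (((d + 1) / 2 * 3 ^ ((d + 1) / 2 - 1) : ℕ) : ℝ) * P := by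
      exact_mod_cast hY
    nlinarith
  calc (fVec _ k : ℝ) ≤ X + Y := by exact_mod_cast hk
    _ < (rho d k + ε) * P := by rw [hXρ]; linarith
    _ ≤ _ := by
      have hρ : (0 : ℝ) ≤ rho d k := by rw [rho]; positivity
      gcongr

theorem exists_polytope_vertex_ratio_close_general (d k : ℕ) (hd : 1 ≤ d)
    (ε : ℝ) (hε : 0 < ε) :
    ∃ (N : ℕ) (P : Set (Euc N)), IsPolytope P ∧ dimSet P = d ∧
      (fVec P k : ℝ) < ((rho d k : ℚ) + ε) * (fVec P 0 : ℝ) := by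
  set M := (d + 1) / 2
  obtain ⟨n, hn⟩ := exists_nat_gt (max 3 ((M * 3 ^ (M - 1) : ℕ) / ε))
  have hn3 : 3 ≤ n := by exact_mod_cast (le_max_left _ _).trans hn.le
  have hnε : ((M * 3 ^ (M - 1) : ℕ) : ℝ) < ε * n :=
    (div_lt_iff₀' hε).1 ((le_max_right _ _).trans_lt hn)
  let e : (Fin M → ℝ × ℝ) ≃ₗ[ℝ] Euc (2 * M) :=
    LinearEquiv.ofFinrankEq _ _ (by simp [finrank_pi_fintype, mul_comm])
  refine ⟨2 * M, productFace e (polygonSizes d n) fun _ => univ, isPolytope_productFace e _ _,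
    ?_, fVec_productFace_polygonSizes_lt e hd hn3 k hnε⟩
  rw [dimSet_productFace e _ fun i =>
    univ_nonempty_iff.2 ⟨⟨0, polygonSizes_pos (by omega : 0 < n) i⟩⟩]
  simpa using sum_min_polygonSizes hn3

/-- For `d ≥ 1`, `0 ≤ k ≤ d-1`, and real `ε > 0`, there is a
`d`-polytope `P` with `f_k(P) < (ρ(d,k) + ε) ⬝ f_0(P)`. -/
theorem exists_polytope_vertex_ratio_close (d k : ℕ) (hd : 1 ≤ d) (hk : k + 1 ≤ d)
    (ε : ℝ) (hε : 0 < ε) :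
    ∃ (N : ℕ) (P : Set (Euc N)), IsPolytope P ∧ dimSet P = d ∧
      (fVec P k : ℝ) < ((rho d k : ℚ) + ε) * (fVec P 0 : ℝ) :=
  exists_polytope_vertex_ratio_close_general d k hd ε hε
end
end
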